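/- Let x : ℝ → ℝ be smooth and suppose the curve (x(y), y) satisfies ⟨[[0,1],[0,0]]·(x(y),y) + (0,1), N⟩ = k^{1/3}, where N = (1+x'²)^{-1/2}(-1, x') and k = -x''/(1+x'²)^{3/2}. Then x'' = (y - x')³. -/

import Mathlib

/-- The real cube root. -/
noncomputable def realCbrt (x : ℝ) : ℝ := Real.sign x * |x| ^ ((1 : ℝ) / 3)

lemma realCbrt_cube (a : ℝ) : (realCbrt a) ^ 3 = a := by
  unfold realCbrt
  rw [mul_pow, ← Real.rpow_natCast (|a| ^ ((1:ℝ)/3)) 3, ← Real.rpow_mul (abs_nonneg a)]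
  norm_num
  rcases lt_trichotomy a 0 with h | h | h
  · rw [Real.sign_of_neg h, abs_of_neg h]; ring
  · simp [h]
  · rw [Real.sign_of_pos h, abs_of_pos h]; ring

/-- Skew steady with translation: a graph solution `(x(y), y)` of
`⟨[[0,1],[0,0]]·(x,y) + (0,1), N⟩ = k^{1/3}` satisfies `x'' = (y - x')³`. -/
theorem skew_steady_with_translation (x : ℝ → ℝ) (hx : ContDiff ℝ (⊤ : ℕ∞) x)
    (heq : ∀ y : ℝ,
      (deriv x y - y) * (1 + (deriv x y) ^ 2) ^ (-(1 : ℝ) / 2) =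
        realCbrt (-(deriv (deriv x) y) / (1 + (deriv x y) ^ 2) ^ ((3 : ℝ) / 2))) :
    ∀ y : ℝ, deriv (deriv x) y = (y - deriv x y) ^ 3 := by
  intro y
  set u := deriv x y with hu
  set v := deriv (deriv x) y with hv
  have hP : (0:ℝ) < 1 + u ^ 2 := by positivity
  have h := heq y
  have hcube := congrArg (· ^ 3) h
  simp only [mul_pow, realCbrt_cube] at hcube
  rw [← Real.rpow_natCast ((1 + u ^ 2) ^ (-(1:ℝ)/2)) 3,
    ← Real.rpow_mul hP.le] at hcube
  have hexp : (-(1:ℝ)/2) * (3:ℕ) = -((3:ℝ)/2) := by push_cast; ring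
  rw [hexp, Real.rpow_neg hP.le] at hcube
  have hne : ((1 + u ^ 2) ^ ((3:ℝ)/2)) ≠ 0 := by positivity
  field_simp at hcube
  rw [← hu, ← hv] at hcube
  have hc : (1 + u ^ 2) ^ ((3:ℝ)/2) * v = (1 + u ^ 2) ^ ((3:ℝ)/2) * (y - u) ^ 3 := by
    linear_combination hcube
  exact mul_left_cancel₀ hne hc
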